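/- For every real number λ > e·√2 there exists a natural number m such that for all n ≥ m and every rooted binary leaf-labeled tree T on Fin n, the average over all permutations σ of Fin n satisfies (1/n!) · ∑_{σ ∈ Sym(Fin n)} MAST(T, σ·T) ≤ λ·√n. (That is, if T₁ and T₂ are generated from the uniform distribution on rooted binary trees with n leaves having the same tree shape — T₂ a uniformly random leaf relabeling of T₁ — then E[MAST(T₁,T₂)] ≤ λ·√n.) -/

import Mathlib

/-- Rooted binary leaf-labeled trees with labels of type `α`. -/
inductive RTree (α : Type) : Type where
  | leaf : α → RTree α
  | node : RTree α → RTree α → RTree α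
  deriving DecidableEq

namespace RTree

variable {α β : Type}

/-- The multiset of leaf labels of a tree. -/
def leafM : RTree α → Multiset α
  | leaf a => {a}
  | node l r => leafM l + leafM r

/-- `T` is a rooted binary leaf-labeled tree on label set `Fin n`:
every label of `Fin n` occurs exactly once among the leaves. -/
def IsRB {n : ℕ} (T : RTree (Fin n)) : Prop :=
  leafM T = (Finset.univ : Finset (Fin n)).val

/-- Relabel the leaves of a tree along a function. -/
def relabel (f : α → β) : RTree α → RTree β
  | leaf a => leaf (f a)
  | node l r => node (relabel f l) (relabel f r)

/-- Restriction of a tree to the set `A` of labels (`none` means the empty tree). -/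
def restrict [DecidableEq α] (A : Finset α) : RTree α → Option (RTree α)
  | leaf a => if a ∈ A then some (leaf a) else none
  | node l r =>
    match restrict A l, restrict A r with
    | some l', some r' => some (node l' r')
    | some l', none => some l'
    | none, some r' => some r'
    | none, none => none

/-- The size of a maximum agreement subtree of `T₁` and `T₂`: the largest cardinality
of a set `A` of labels with `T₁|_A = T₂|_A` (the empty set always agrees). -/
def mast {n : ℕ} (T₁ T₂ : RTree (Fin n)) : ℕ :=
  ((Finset.univ : Finset (Fin n)).powerset.filter
    (fun A => restrict A T₁ = restrict A T₂)).sup Finset.card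

end RTree

/-!
If `T|_A = (σ·T)|_A`, then `σ` is determined on `B = σ⁻¹(A)` by `T`, `A` and `B` alone: it sends
the leaves of `T|_B` to those of `T|_A` in left-to-right order. Hence at most `C(n,j)² (n-j)!`
permutations admit an agreement set of size `j`, a fraction `C(n,j)/j! ≤ (e²n/j²)^j` of all of
them. For `j ≥ c√n` with `e < c < λ` this is at most `θ^(c√n)` where `θ = (e/c)² < 1`, so the
average of `MAST(T, σ·T)` is at most `⌈c√n⌉ + n² θ^(c√n)`, which is below `λ√n` for large `n`.
-/

open Finset Filter Topology
open scoped Nat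

lemma Finset.sum_le_card_mul_add_mul_card_filter_lt {ι : Type*} (s : Finset ι) (f : ι → ℕ)
    (k : ℕ) {M : ℕ} (hf : ∀ i ∈ s, f i ≤ M) :
    ∑ i ∈ s, f i ≤ #s * k + M * #{i ∈ s | k < f i} := by
  rw [← sum_filter_not_add_sum_filter s (k < f ·)]
  gcongr
  · calc ∑ i ∈ s with ¬k < f i, f i ≤ #{i ∈ s | ¬k < f i} * k :=
          sum_le_card_nsmul _ _ _ fun i hi => not_lt.1 (mem_filter.1 hi).2
      _ ≤ #s * k := by gcongr; exact filter_subset _ _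
  · calc ∑ i ∈ s with k < f i, f i ≤ #{i ∈ s | k < f i} * M :=
          sum_le_card_nsmul _ _ _ fun i hi => hf i (mem_filter.1 hi).1
      _ = M * #{i ∈ s | k < f i} := mul_comm _ _

lemma Nat.choose_sq_mul_factorial_le {n j : ℕ} (hj : j ≤ n) :
    (n.choose j ^ 2 * (n - j)! : ℝ) ≤ (Real.exp 1 ^ 2 * n / j ^ 2) ^ j * n ! := by
  have hchoose : (n.choose j : ℝ) ≤ (Real.exp 1 ^ 2 * n / j ^ 2) ^ j * j ! := by
    rcases j.eq_zero_or_pos with rfl | hj0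
    · simp
    have hjj : (j : ℝ) ^ j ≤ Real.exp 1 ^ j * j ! := by
      have := Real.pow_div_factorial_le_exp (j : ℝ) (Nat.cast_nonneg j) j
      rwa [div_le_iff₀ (by positivity), ← Real.exp_one_pow] at this
    calc (n.choose j : ℝ) ≤ n ^ j / j ! := Nat.choose_le_pow_div j n
      _ = n ^ j * j ! / (j ! : ℝ) ^ 2 := by field_simp
      _ ≤ n ^ j * j ! * (Real.exp 1 ^ j) ^ 2 / ((j : ℝ) ^ j) ^ 2 := by
          have hsq : ((j : ℝ) ^ j) ^ 2 ≤ (Real.exp 1 ^ j) ^ 2 * (j ! : ℝ) ^ 2 := by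
            rw [← mul_pow]; gcongr
          rw [div_le_div_iff₀ (by positivity) (by positivity)]
          calc (n : ℝ) ^ j * j ! * ((j : ℝ) ^ j) ^ 2
              ≤ n ^ j * j ! * ((Real.exp 1 ^ j) ^ 2 * (j ! : ℝ) ^ 2) := by gcongr
            _ = _ := by ring
      _ = (Real.exp 1 ^ 2 * n / j ^ 2) ^ j * j ! := by
          rw [div_pow, mul_pow, ← pow_mul, ← pow_mul, ← pow_mul, ← pow_mul]
          ring
  have hfact : (n ! : ℝ) = n.choose j * j ! * (n - j)! :=
    mod_cast (Nat.choose_mul_factorial_mul_factorial hj).symm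
  calc (n.choose j ^ 2 * (n - j)! : ℝ) = n.choose j * (n.choose j * (n - j)!) := by ring
    _ ≤ (Real.exp 1 ^ 2 * n / j ^ 2) ^ j * j ! * (n.choose j * (n - j)!) := by gcongr
    _ = (Real.exp 1 ^ 2 * n / j ^ 2) ^ j * n ! := by rw [hfact]; ring

namespace Equiv.Perm

variable {α : Type*} [Fintype α] [DecidableEq α]

lemma card_filter_forall_mem_apply_eq_self (B : Finset α) :
    #{σ : Perm α | ∀ b ∈ B, σ b = b} = (Fintype.card α - #B)! := by
  rw [← Fintype.card_subtype, ← Fintype.card_congr ((Perm.subtypeEquivSubtypePerm (· ∉ B)).trans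
    (Equiv.subtypeEquivRight (by simp))), Fintype.card_perm, Fintype.card_subtype_compl,
    Fintype.card_coe]

lemma card_filter_forall_mem_apply_eq_le (B : Finset α) (g : α → α) :
    #{σ : Perm α | ∀ b ∈ B, σ b = g b} ≤ (Fintype.card α - #B)! := by
  rcases Finset.eq_empty_or_nonempty {σ : Perm α | ∀ b ∈ B, σ b = g b} with h | ⟨σ₀, hσ₀⟩
  · simp [h]
  rw [← card_filter_forall_mem_apply_eq_self]
  refine card_le_card_of_injOn (σ₀⁻¹ * ·) (fun σ hσ => ?_) (mul_right_injective σ₀⁻¹).injOn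
  simp only [coe_filter, Set.mem_ofPred_eq, mem_filter, mem_univ, true_and] at hσ hσ₀ ⊢
  intro b hb
  rw [mul_apply, hσ b hb, ← hσ₀ b hb, inv_eq_iff_eq]

end Equiv.Perm

lemma sum_Ioc_exp_one_sq_mul_div_sq_pow_le {n k : ℕ} {c : ℝ} (hc : Real.exp 1 ≤ c)
    (hk : c * √n ≤ k) :
    ∑ j ∈ Ioc k n, (Real.exp 1 ^ 2 * n / j ^ 2) ^ j ≤ n * ((Real.exp 1 / c) ^ 2) ^ (c * √n) := by
  have hc0 : 0 < c := (Real.exp_pos 1).trans_le hc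
  have hθ1 : (Real.exp 1 / c) ^ 2 ≤ 1 := pow_le_one₀ (by positivity) ((div_le_one hc0).2 hc)
  calc ∑ j ∈ Ioc k n, (Real.exp 1 ^ 2 * n / j ^ 2) ^ j
      ≤ ∑ _j ∈ Ioc k n, ((Real.exp 1 / c) ^ 2) ^ (c * √n) := by
        refine sum_le_sum fun j hjk => ?_
        have hj : c * √n ≤ j := hk.trans (by exact_mod_cast (mem_Ioc.1 hjk).1.le)
        have hj0 : (0 : ℝ) < j := by exact_mod_cast (Nat.zero_le k).trans_lt (mem_Ioc.1 hjk).1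
        have hbase : Real.exp 1 ^ 2 * n / j ^ 2 ≤ (Real.exp 1 / c) ^ 2 := by
          have hsq : c ^ 2 * n ≤ (j : ℝ) ^ 2 := by
            simpa [mul_pow, Real.sq_sqrt (Nat.cast_nonneg n)] using
              pow_le_pow_left₀ (by positivity) hj 2
          rw [div_pow, div_le_div_iff₀ (by positivity) (by positivity)]
          calc Real.exp 1 ^ 2 * n * c ^ 2 = Real.exp 1 ^ 2 * (c ^ 2 * n) := by ring
            _ ≤ Real.exp 1 ^ 2 * j ^ 2 := by gcongr
        calc (Real.exp 1 ^ 2 * n / j ^ 2) ^ j ≤ ((Real.exp 1 / c) ^ 2) ^ j := by gcongr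
          _ = ((Real.exp 1 / c) ^ 2) ^ (j : ℝ) := (Real.rpow_natCast _ _).symm
          _ ≤ ((Real.exp 1 / c) ^ 2) ^ (c * √n) :=
            Real.rpow_le_rpow_of_exponent_ge (by positivity) hθ1 hj
    _ ≤ n * ((Real.exp 1 / c) ^ 2) ^ (c * √n) := by
        rw [sum_const, nsmul_eq_mul, Nat.card_Ioc]
        gcongr
        exact_mod_cast Nat.sub_le n k

lemma tendsto_sq_mul_rpow_mul_sqrt {θ c : ℝ} (hθ0 : 0 < θ) (hθ1 : θ < 1) (hc : 0 < c) :
    Tendsto (fun n : ℕ => (n : ℝ) ^ 2 * θ ^ (c * √n)) atTop (𝓝 0) := by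
  have hb : 0 < -(c * Real.log θ) := neg_pos.2 (mul_neg_of_pos_of_neg hc (Real.log_neg hθ0 hθ1))
  have hsqrt : Tendsto (fun n : ℕ => √(n : ℝ)) atTop atTop :=
    Real.tendsto_sqrt_atTop.comp tendsto_natCast_atTop_atTop
  refine ((isLittleO_pow_exp_pos_mul_atTop 4 hb).tendsto_div_nhds_zero.comp hsqrt).congr
    fun n => ?_
  rw [Function.comp_apply, Real.rpow_def_of_pos hθ0, div_eq_mul_inv, ← Real.exp_neg,
    show (√(n : ℝ)) ^ 4 = (√(n : ℝ) ^ 2) ^ 2 by ring, Real.sq_sqrt (Nat.cast_nonneg n)]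
  ring_nf

namespace RTree

variable {α β : Type}

def leafList : RTree α → List α
  | leaf a => [a]
  | node l r => leafList l ++ leafList r

lemma coe_leafList (t : RTree α) : (leafList t : Multiset α) = leafM t := by
  induction t with
  | leaf a => rfl
  | node l r ihl ihr => simp [leafM, leafList, ← ihl, ← ihr]

lemma leafList_relabel (f : α → β) (t : RTree α) :
    leafList (relabel f t) = (leafList t).map f := by
  induction t <;> simp [relabel, leafList, *]

section Restrict

variable [DecidableEq α]

lemma restrict_empty (t : RTree α) : restrict ∅ t = none := by
  induction t <;> simp [restrict, *]

lemma restrict_relabel [DecidableEq β] (e : α ≃ β) (A : Finset β) (t : RTree α) :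
    restrict A (relabel e t) = (restrict (A.image e.symm) t).map (relabel e) := by
  induction t with
  | leaf a =>
    have : a ∈ A.image e.symm ↔ e a ∈ A := by simp [Equiv.symm_apply_eq]
    by_cases h : e a ∈ A <;> simp [relabel, restrict, h, this]
  | node l r ihl ihr =>
    cases hl : restrict (A.image e.symm) l <;> cases hr : restrict (A.image e.symm) r <;>
      simp [relabel, restrict, ihl, ihr, hl, hr]

lemma leafM_restrict (A : Finset α) (t : RTree α) :
    (restrict A t).elim 0 leafM = (leafM t).filter (· ∈ A) := by
  induction t with
  | leaf a => by_cases h : a ∈ A <;> simp [restrict, leafM, h, Multiset.filter_singleton]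
  | node l r ihl ihr =>
    cases hl : restrict A l <;> cases hr : restrict A r <;>
      simp only [hl, hr, Option.elim] at ihl ihr <;>
      simp [restrict, leafM, hl, hr, Multiset.filter_add, ← ihl, ← ihr]

lemma exists_restrict_eq_some {A : Finset α} {t : RTree α} {b : α} (hbt : b ∈ leafM t)
    (hbA : b ∈ A) : ∃ u, restrict A t = some u ∧ b ∈ leafList u := by
  have hb : b ∈ (restrict A t).elim 0 leafM := by
    rw [leafM_restrict]
    exact Multiset.mem_filter.2 ⟨hbt, hbA⟩
  cases h : restrict A t with
  | none => simp [h] at hb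
  | some u => exact ⟨u, rfl, by rw [← Multiset.mem_coe, coe_leafList]; simpa [h] using hb⟩

/-- Sends the `i`-th leaf of `T|_B` to the `i`-th leaf of `T|_A`; if `T|_A = σ(T|_B)`, this is `σ`
on the leaves of `T|_B`. -/
def leafTransfer (T : RTree α) (A B : Finset α) (b : α) : α :=
  match restrict A T, restrict B T with
  | some u, some v => (leafList u).getD ((leafList v).idxOf b) b
  | _, _ => b

lemma apply_eq_leafTransfer {T : RTree α} {σ : Equiv.Perm α} {A : Finset α}
    (h : restrict A T = restrict A (relabel σ T)) {b : α} (hbT : b ∈ leafM T)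
    (hbA : b ∈ A.image σ.symm) : σ b = leafTransfer T A (A.image σ.symm) b := by
  obtain ⟨v, hv, hbv⟩ := exists_restrict_eq_some hbT hbA
  rw [restrict_relabel, hv, Option.map_some] at h
  have hlt : (leafList v).idxOf b < (leafList v).length := List.idxOf_lt_length_iff.2 hbv
  simp only [leafTransfer, h, hv, leafList_relabel]
  rw [List.getD_eq_getElem _ _ (by simpa using hlt), List.getElem_map, List.getElem_idxOf hlt]

end Restrict

variable {n : ℕ}

lemma exists_card_eq_mast (T₁ T₂ : RTree (Fin n)) :
    ∃ A : Finset (Fin n), #A = mast T₁ T₂ ∧ restrict A T₁ = restrict A T₂ := by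
  obtain ⟨A, hA, hmax⟩ := exists_mem_eq_sup
    ((univ : Finset (Fin n)).powerset.filter (fun A => restrict A T₁ = restrict A T₂))
    ⟨∅, by simp [restrict_empty]⟩ card
  exact ⟨A, hmax.symm, (mem_filter.1 hA).2⟩

lemma mast_le (T₁ T₂ : RTree (Fin n)) : mast T₁ T₂ ≤ n :=
  Finset.sup_le fun A _ => by simpa using card_le_univ A

lemma card_filter_exists_agreement_le {T : RTree (Fin n)} (hT : IsRB T) (j : ℕ) :
    #{σ : Equiv.Perm (Fin n) | ∃ A : Finset (Fin n), #A = j ∧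
        restrict A T = restrict A (relabel σ T)} ≤ n.choose j ^ 2 * (n - j)! := by
  have hleaf (b : Fin n) : b ∈ leafM T := by rw [show leafM T = _ from hT]; exact mem_univ b
  calc _ ≤ #((powersetCard j univ ×ˢ powersetCard j univ).biUnion fun p =>
        {σ : Equiv.Perm (Fin n) | ∀ b ∈ p.2, σ b = leafTransfer T p.1 p.2 b}) := by
        refine card_le_card fun σ hσ => ?_
        obtain ⟨A, hAj, hA⟩ := (mem_filter.1 hσ).2
        refine mem_biUnion.2 ⟨(A, A.image σ.symm), ?_, ?_⟩
        · simp [hAj, card_image_of_injective A σ.symm.injective]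
        · exact mem_filter.2 ⟨mem_univ σ, fun b hb => apply_eq_leafTransfer hA (hleaf b) hb⟩
    _ ≤ ∑ p ∈ powersetCard j univ ×ˢ powersetCard j univ, (n - j)! := by
        refine card_biUnion_le.trans (sum_le_sum fun p hp => ?_)
        have hp2 : #p.2 = j := mem_powersetCard_univ.1 (mem_product.1 hp).2
        have := Equiv.Perm.card_filter_forall_mem_apply_eq_le p.2 (leafTransfer T p.1 p.2)
        rw [Fintype.card_fin, hp2] at this
        -- the two filters differ only in their `DecidablePred` instances
        exact (le_of_eq (by congr)).trans this
    _ = n.choose j ^ 2 * (n - j)! := by simp [sq]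

lemma card_filter_lt_mast_le {T : RTree (Fin n)} (hT : IsRB T) (k : ℕ) :
    #{σ : Equiv.Perm (Fin n) | k < mast T (relabel σ T)}
      ≤ ∑ j ∈ Ioc k n, n.choose j ^ 2 * (n - j)! := by
  calc _ ≤ #((Ioc k n).biUnion fun j => {σ : Equiv.Perm (Fin n) | ∃ A : Finset (Fin n),
        #A = j ∧ restrict A T = restrict A (relabel σ T)}) := by
        refine card_le_card fun σ hσ => ?_
        obtain ⟨A, hAcard, hA⟩ := exists_card_eq_mast T (relabel σ T)
        refine mem_biUnion.2 ⟨#A, ?_, mem_filter.2 ⟨mem_univ σ, A, rfl, hA⟩⟩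
        rw [mem_Ioc, hAcard]
        exact ⟨(mem_filter.1 hσ).2, mast_le _ _⟩
    _ ≤ _ := card_biUnion_le.trans (sum_le_sum fun j _ => card_filter_exists_agreement_le hT j)

lemma average_mast_le {T : RTree (Fin n)} (hT : IsRB T) (k : ℕ) :
    (1 / (n ! : ℝ)) * ∑ σ : Equiv.Perm (Fin n), (mast T (relabel σ T) : ℝ)
      ≤ k + n * ∑ j ∈ Ioc k n, (Real.exp 1 ^ 2 * n / j ^ 2) ^ j := by
  have hcount : ∑ σ : Equiv.Perm (Fin n), mast T (relabel σ T)
      ≤ n ! * k + n * ∑ j ∈ Ioc k n, n.choose j ^ 2 * (n - j)! := by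
    refine (sum_le_card_mul_add_mul_card_filter_lt _ _ k fun σ _ => mast_le T _).trans ?_
    rw [card_univ, Fintype.card_perm, Fintype.card_fin]
    gcongr
    exact card_filter_lt_mast_le hT k
  have hterm : ∀ j ∈ Ioc k n, (n.choose j ^ 2 * (n - j)! : ℝ)
      ≤ (Real.exp 1 ^ 2 * n / j ^ 2) ^ j * n ! :=
    fun j hj => Nat.choose_sq_mul_factorial_le (mem_Ioc.1 hj).2
  rw [one_div, inv_mul_le_iff₀ (by positivity)]
  calc ∑ σ : Equiv.Perm (Fin n), (mast T (relabel σ T) : ℝ)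
      ≤ n ! * k + n * ∑ j ∈ Ioc k n, (n.choose j ^ 2 * (n - j)! : ℝ) := by exact_mod_cast hcount
    _ ≤ n ! * k + n * ∑ j ∈ Ioc k n, (Real.exp 1 ^ 2 * n / j ^ 2) ^ j * n ! := by
        gcongr _ + _ * ?_; exact sum_le_sum hterm
    _ = n ! * (k + n * ∑ j ∈ Ioc k n, (Real.exp 1 ^ 2 * n / j ^ 2) ^ j) := by
        rw [← sum_mul]; ring

lemma eventually_average_mast_le {lam : ℝ} (hlam : Real.exp 1 < lam) :
    ∀ᶠ n in atTop, ∀ T : RTree (Fin n), IsRB T →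
      (1 / (n ! : ℝ)) * ∑ σ : Equiv.Perm (Fin n), (mast T (relabel σ T) : ℝ) ≤ lam * √n := by
  obtain ⟨c, hec, hclam⟩ := exists_between hlam
  have hc0 : 0 < c := (Real.exp_pos 1).trans hec
  have hθ0 : 0 < (Real.exp 1 / c) ^ 2 := by positivity
  have hθ1 : (Real.exp 1 / c) ^ 2 < 1 :=
    pow_lt_one₀ (by positivity) ((div_lt_one hc0).2 hec) two_ne_zero
  have hsmall : ∀ᶠ n : ℕ in atTop, (n : ℝ) ^ 2 * ((Real.exp 1 / c) ^ 2) ^ (c * √n) ≤ 1 :=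
    (tendsto_sq_mul_rpow_mul_sqrt hθ0 hθ1 hc0).eventually (Iic_mem_nhds one_pos)
  have hlarge : ∀ᶠ n : ℕ in atTop, 2 ≤ (lam - c) * √n :=
    ((Real.tendsto_sqrt_atTop.comp tendsto_natCast_atTop_atTop).const_mul_atTop
      (sub_pos.2 hclam)).eventually_ge_atTop 2
  filter_upwards [hsmall, hlarge] with n hsmall hlarge T hT
  have hk : c * √n ≤ ⌈c * √n⌉₊ := Nat.le_ceil _
  have hk' : (⌈c * √n⌉₊ : ℝ) < c * √n + 1 := Nat.ceil_lt_add_one (by positivity)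
  calc _ ≤ ⌈c * √n⌉₊ + n * ∑ j ∈ Ioc ⌈c * √n⌉₊ n, (Real.exp 1 ^ 2 * n / j ^ 2) ^ j :=
        average_mast_le hT _
    _ ≤ ⌈c * √n⌉₊ + n * (n * ((Real.exp 1 / c) ^ 2) ^ (c * √n)) := by
        gcongr; exact sum_Ioc_exp_one_sq_mul_div_sq_pow_le hec.le hk
    _ ≤ lam * √n := by
        have hsq : (n : ℝ) * (n * ((Real.exp 1 / c) ^ 2) ^ (c * √n)) ≤ 1 := by
          rw [← mul_assoc, ← sq]; exact hsmall
        linarith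

end RTree

/-- For every `λ > e·√2` there is an `m` such that for all `n ≥ m` and every rooted binary
leaf-labeled tree `T` on `Fin n`, the average of `MAST(T, σ·T)` over all permutations `σ`
of `Fin n` is at most `λ·√n`. -/
theorem average_mast_same_shape_upper_bound (lam : ℝ)
    (hlam : Real.exp 1 * Real.sqrt 2 < lam) :
    ∃ m : ℕ, ∀ n : ℕ, m ≤ n → ∀ T : RTree (Fin n), RTree.IsRB T →
      (1 / (n.factorial : ℝ)) *
          ∑ σ : Equiv.Perm (Fin n), (RTree.mast T (RTree.relabel (⇑σ) T) : ℝ)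
        ≤ lam * Real.sqrt n :=
  eventually_atTop.1 <| RTree.eventually_average_mast_le <|
    (lt_mul_of_one_lt_right (Real.exp_pos 1) Real.one_lt_sqrt_two).trans hlam
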